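/- arXiv:2404.17274 — 2 statements merged into one kernel-verified Lean document; each statement's English description precedes it below -/
import Mathlib

section
/- For every high-multiplicity scheduling instance on identical machines there exists a schedule x* that maximizes Cmin (i.e., Cmin(x) ≤ Cmin(x*) for every schedule x) and has gap size at most pmax, i.e., x* i₁ j ≤ x* i₂ j + pmax for all machines i₁, i₂ and all job types j. -/
/-- A schedule assigns `x i j` jobs of type `j` to machine `i`, placing all `n j` jobs. -/
def IsSchedule {m d : ℕ} (n : Fin d → ℕ) (x : Fin m → Fin d → ℕ) : Prop :=
  ∀ j, ∑ i, x i j = n j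

/-- The load of machine `i` under schedule `x`. -/
def load {m d : ℕ} (p : Fin d → ℕ) (x : Fin m → Fin d → ℕ) (i : Fin m) : ℕ :=
  ∑ j, x i j * p j

/-- The makespan: the maximum machine load. -/
def Cmax {m d : ℕ} (p : Fin d → ℕ) (x : Fin m → Fin d → ℕ) : ℕ :=
  Finset.univ.sup (load p x)

/-- The minimum machine load. -/
noncomputable def Cmin {m d : ℕ} (p : Fin d → ℕ) (x : Fin m → Fin d → ℕ) : ℕ :=
  sInf (Set.range (load p x))

/-- The envy value: maximum load minus minimum load. -/
noncomputable def Cenvy {m d : ℕ} (p : Fin d → ℕ) (x : Fin m → Fin d → ℕ) : ℕ :=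
  Cmax p x - Cmin p x

/-!
Among the schedules maximizing `Cmin`, take one minimizing `∑ i, ∑ j, x i j ^ 2`. If
`x i₁ j > x i₂ j + pmax`, either `i₁` is heavier than `i₂` by at least `p j`, and moving one job
of type `j` from `i₁` to `i₂` keeps every load at least `Cmin`; or it is not, and then the jobs of
the other types of which `i₂` has more than `i₁` have total size above `pmax * p j`. Pigeonhole on
their prefix sums modulo `p j` gives a sub-bundle of total size `q * p j` with `1 ≤ q ≤ pmax`,
which `i₂` swaps for `q` jobs of type `j` without changing any load. Either move keeps `Cmin`
and strictly decreases the sum of squares.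
-/

open Finset

theorem List.exists_sublist_dvd_sum_map {α : Type*} (l : List α) (w : α → ℕ) {P : ℕ}
    (hP : 0 < P) (hl : P ≤ l.length) :
    ∃ l' : List α, l'.Sublist l ∧ 0 < l'.length ∧ l'.length ≤ P ∧ P ∣ (l'.map w).sum := by
  -- two of the prefix sums of lengths `0, …, P` agree modulo `P`
  obtain ⟨a, ha, b, hb, hab, hmod⟩ := exists_ne_map_eq_of_card_lt_of_maps_to
    (s := Finset.range (P + 1)) (t := Finset.range P) (by simp)
    (f := fun r => ((l.take r).map w).sum % P) (fun r _ => Finset.mem_range.2 (Nat.mod_lt _ hP))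
  wlog h : a < b generalizing a b
  · exact this b hb a ha hab.symm hmod.symm (by omega)
  rw [Finset.mem_range] at ha hb
  refine ⟨(l.take b).drop a, (List.drop_sublist _ _).trans (List.take_sublist _ _),
    by simp; omega, by simp; omega, ?_⟩
  have hsplit := List.sum_take_add_sum_drop ((l.take b).map w) a
  rw [← List.map_take, ← List.map_drop, List.take_take, min_eq_left h.le] at hsplit
  rw [← hsplit] at hmod
  simpa using Nat.dvd_of_mod_eq_zero (Nat.sub_mod_eq_zero_of_mod_eq hmod.symm)

theorem Multiset.exists_le_dvd_sum_map {α : Type*} (s : Multiset α) (w : α → ℕ) {P : ℕ}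
    (hP : 0 < P) (hs : P ≤ card s) :
    ∃ t ≤ s, 0 < card t ∧ card t ≤ P ∧ P ∣ (t.map w).sum := by
  induction s using Quotient.inductionOn with
  | h l =>
    obtain ⟨l', hsub, hpos, hle, hdvd⟩ := l.exists_sublist_dvd_sum_map w hP hs
    exact ⟨l', Multiset.coe_le.2 hsub.subperm, hpos, hle, by simpa using hdvd⟩

theorem Multiset.sum_map_eq_sum_count_mul {α : Type*} [Fintype α] [DecidableEq α]
    (t : Multiset α) (w : α → ℕ) : (t.map w).sum = ∑ k, t.count k * w k := by
  rw [sum_multiset_map_count]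
  exact sum_subset (subset_univ _) fun k _ hk => by
    simp [Multiset.count_eq_zero.2 (by simpa using hk)]

theorem exists_le_sum_mul_eq_mul {α : Type*} [Fintype α] [DecidableEq α] {w c : α → ℕ}
    {K P : ℕ} (hw : ∀ k, 1 ≤ w k) (hK : ∀ k, w k ≤ K) (hP : 0 < P)
    (h : K * P < ∑ k, c k * w k) :
    ∃ t ≤ c, ∃ q, 0 < q ∧ q ≤ K ∧ ∑ k, t k * w k = q * P := by
  set M : Multiset α := ∑ k, Multiset.replicate (c k) k
  have hcount : ∀ k, M.count k = c k := fun k => by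
    simp [M, Multiset.count_sum', Multiset.count_replicate]
  have hsize_le : ∀ s : Multiset α, (s.map w).sum ≤ Multiset.card s * K := fun s => by
    simpa using Multiset.sum_le_card_nsmul (s.map w) K (by simpa using fun a _ => hK a)
  have hcard_le : ∀ s : Multiset α, Multiset.card s ≤ (s.map w).sum := fun s => by
    simpa using
      Multiset.card_nsmul_le_sum (s := s.map w) (a := 1) (by simpa using fun a _ => hw a)
  have hM : (M.map w).sum = ∑ k, c k * w k := by
    simp only [Multiset.sum_map_eq_sum_count_mul, hcount]
  have hPM : P < Multiset.card M :=
    Nat.lt_of_mul_lt_mul_left (a := K) (by linarith [hsize_le M, mul_comm (Multiset.card M) K])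
  obtain ⟨t, htM, hpos, hle, q, hq⟩ := M.exists_le_dvd_sum_map w hP hPM.le
  refine ⟨fun k => t.count k, fun k => hcount k ▸ Multiset.count_le_of_le k htM, q, ?_, ?_, ?_⟩
  · have := hcard_le t
    exact Nat.pos_of_ne_zero (by rintro rfl; simp at hq; omega)
  · have := hsize_le t
    have : P * q ≤ P * K := by nlinarith
    exact Nat.le_of_mul_le_mul_left this hP
  · rw [← Multiset.sum_map_eq_sum_count_mul, hq, mul_comm]

theorem sum_add_pair_eq_sum_add_pair {ι M : Type*} [Fintype ι] [DecidableEq ι]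
    [AddCommMonoid M] {f g : ι → M} {i₁ i₂ : ι} (h : i₁ ≠ i₂)
    (hfg : ∀ i, i ≠ i₁ → i ≠ i₂ → f i = g i) :
    ∑ i, f i + (g i₁ + g i₂) = ∑ i, g i + (f i₁ + f i₂) := by
  have hrest : ∑ i ∈ {i₁, i₂}ᶜ, f i = ∑ i ∈ {i₁, i₂}ᶜ, g i :=
    sum_congr rfl fun i hi => by
      simp only [mem_compl, mem_insert, mem_singleton, not_or] at hi
      exact hfg i hi.1 hi.2
  rw [← sum_compl_add_sum {i₁, i₂} f, ← sum_compl_add_sum {i₁, i₂} g, sum_pair h, sum_pair h,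
    hrest, add_right_comm]

theorem tsub_sq_add_add_sq_le {y z s : ℕ} (h : s ≤ z - y) :
    (z - s) ^ 2 + (y + s) ^ 2 ≤ z ^ 2 + y ^ 2 := by
  rcases Nat.eq_zero_or_pos s with rfl | hs
  · simp
  · obtain ⟨c, rfl⟩ : ∃ c, z = c + s := ⟨z - s, by omega⟩
    rw [Nat.add_sub_cancel]
    have : y ≤ c := by omega
    nlinarith [Nat.mul_le_mul_left s this]

theorem tsub_sq_add_add_sq_lt {y z s : ℕ} (hs : 0 < s) (h : s < z - y) :
    (z - s) ^ 2 + (y + s) ^ 2 < z ^ 2 + y ^ 2 := by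
  obtain ⟨c, rfl⟩ : ∃ c, z = c + s := ⟨z - s, by omega⟩
  rw [Nat.add_sub_cancel]
  have : y < c := by omega
  nlinarith [Nat.mul_lt_mul_of_pos_left this hs]

variable {m d : ℕ}

def transfer (x : Fin m → Fin d → ℕ) (i₁ i₂ : Fin m) (a b : Fin d → ℕ) : Fin m → Fin d → ℕ :=
  Function.update (Function.update x i₁ (x i₁ - a + b)) i₂ (x i₂ + a - b)

def sumSq (x : Fin m → Fin d → ℕ) : ℕ := ∑ i, ∑ k, x i k ^ 2

section transfer

variable {x : Fin m → Fin d → ℕ} {i₁ i₂ : Fin m} {a b : Fin d → ℕ}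

theorem transfer_apply_left (h : i₁ ≠ i₂) : transfer x i₁ i₂ a b i₁ = x i₁ - a + b := by
  simp [transfer, Function.update_of_ne h]

theorem transfer_apply_right : transfer x i₁ i₂ a b i₂ = x i₂ + a - b := by
  simp [transfer]

theorem transfer_apply_of_ne {i : Fin m} (h₁ : i ≠ i₁) (h₂ : i ≠ i₂) :
    transfer x i₁ i₂ a b i = x i := by
  simp [transfer, Function.update_of_ne h₁, Function.update_of_ne h₂]

theorem isSchedule_transfer {n : Fin d → ℕ} (h : i₁ ≠ i₂) (ha : a ≤ x i₁) (hb : b ≤ x i₂)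
    (hx : IsSchedule n x) : IsSchedule n (transfer x i₁ i₂ a b) := by
  intro k
  rw [← hx k]
  refine add_right_cancel (b := x i₁ k + x i₂ k) ?_
  refine (sum_add_pair_eq_sum_add_pair (f := fun i => transfer x i₁ i₂ a b i k)
    (g := fun i => x i k) h fun i h₁ h₂ => by rw [transfer_apply_of_ne h₁ h₂]).trans ?_
  rw [transfer_apply_left h, transfer_apply_right]
  simp only [Pi.add_apply, Pi.sub_apply]
  have : a k ≤ x i₁ k := ha k
  have : b k ≤ x i₂ k := hb k
  omega

theorem load_transfer_left (p : Fin d → ℕ) (h : i₁ ≠ i₂) (ha : a ≤ x i₁) :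
    load p (transfer x i₁ i₂ a b) i₁ + ∑ k, a k * p k = load p x i₁ + ∑ k, b k * p k := by
  simp only [load, transfer_apply_left h, ← sum_add_distrib, ← add_mul, Pi.add_apply,
    Pi.sub_apply]
  exact sum_congr rfl fun k _ => by have : a k ≤ x i₁ k := ha k; congr 1; omega

theorem load_transfer_right (p : Fin d → ℕ) (hb : b ≤ x i₂) :
    load p (transfer x i₁ i₂ a b) i₂ + ∑ k, b k * p k = load p x i₂ + ∑ k, a k * p k := by
  simp only [load, transfer_apply_right, ← sum_add_distrib, ← add_mul, Pi.add_apply,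
    Pi.sub_apply]
  exact sum_congr rfl fun k _ => by have : b k ≤ x i₂ k := hb k; congr 1; omega

theorem le_load_transfer (p : Fin d → ℕ) {c : ℕ} (hx : ∀ i, c ≤ load p x i)
    (h₁ : c ≤ load p (transfer x i₁ i₂ a b) i₁) (h₂ : c ≤ load p (transfer x i₁ i₂ a b) i₂)
    (i : Fin m) : c ≤ load p (transfer x i₁ i₂ a b) i := by
  by_cases hi₁ : i = i₁
  · exact hi₁ ▸ h₁
  by_cases hi₂ : i = i₂
  · exact hi₂ ▸ h₂
  simpa only [load, transfer_apply_of_ne hi₁ hi₂] using hx i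

end transfer

/-- Since `t` only draws on the surplus of `i₂` over `i₁`, the exchange brings every column of
rows `i₁`, `i₂` closer together, and column `j` strictly so. -/
theorem sumSq_transfer_lt {x : Fin m → Fin d → ℕ} {i₁ i₂ : Fin m} {j : Fin d} {q : ℕ}
    {t : Fin d → ℕ} (h : i₁ ≠ i₂) (hq : 0 < q) (hqj : q < x i₁ j - x i₂ j)
    (ht : t ≤ x i₂ - x i₁) : sumSq (transfer x i₁ i₂ (Pi.single j q) t) < sumSq x := by
  set x' := transfer x i₁ i₂ (Pi.single j q) t
  have hx' : ∀ k, x' i₁ k = x i₁ k - (Pi.single j q : Fin d → ℕ) k + t k ∧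
      x' i₂ k = x i₂ k + (Pi.single j q : Fin d → ℕ) k - t k := fun k =>
    ⟨by simp [x', transfer_apply_left h], by simp [x', transfer_apply_right]⟩
  have hrows : ∑ k, x' i₁ k ^ 2 + ∑ k, x' i₂ k ^ 2 < ∑ k, x i₁ k ^ 2 + ∑ k, x i₂ k ^ 2 := by
    simp only [← sum_add_distrib]
    have htj : t j = 0 := by have : t j ≤ x i₂ j - x i₁ j := ht j; omega
    have hj : x' i₁ j ^ 2 + x' i₂ j ^ 2 < x i₁ j ^ 2 + x i₂ j ^ 2 := by
      simpa [(hx' j).1, (hx' j).2, htj] using tsub_sq_add_add_sq_lt hq hqj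
    refine sum_lt_sum (fun k _ => ?_) ⟨j, mem_univ j, hj⟩
    rcases eq_or_ne k j with rfl | hkj
    · exact hj.le
    · simpa [(hx' k).1, (hx' k).2, Pi.single_apply, hkj, add_comm]
        using tsub_sq_add_add_sq_le (ht k)
  have := sum_add_pair_eq_sum_add_pair (f := fun i => ∑ k, x' i k ^ 2)
    (g := fun i => ∑ k, x i k ^ 2) h fun i h₁ h₂ => by simp only [x', transfer_apply_of_ne h₁ h₂]
  unfold sumSq
  omega

theorem mul_lt_sum_tsub_mul {α : Type*} [Fintype α] {u v w : α → ℕ} {j : α} {K : ℕ}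
    (hgap : v j + K < u j) (hlt : ∑ k, u k * w k < ∑ k, v k * w k + w j) :
    K * w j < ∑ k, (v - u) k * w k := by
  have hswap : ∑ k, u k * w k + ∑ k, (v - u) k * w k
      = ∑ k, v k * w k + ∑ k, (u - v) k * w k := by
    simp only [← sum_add_distrib, ← add_mul, Pi.sub_apply, add_tsub_eq_max, max_comm]
  have hj : (u j - v j) * w j ≤ ∑ k, (u - v) k * w k :=
    single_le_sum (f := fun k => (u - v) k * w k) (fun _ _ => Nat.zero_le _) (mem_univ j)
  have : (K + 1) * w j ≤ (u j - v j) * w j := Nat.mul_le_mul_right _ (by omega)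
  linarith

theorem Cmin_le_load (p : Fin d → ℕ) (x : Fin m → Fin d → ℕ) (i : Fin m) :
    Cmin p x ≤ load p x i :=
  Nat.sInf_le ⟨i, rfl⟩

theorem le_Cmin [Nonempty (Fin m)] {p : Fin d → ℕ} {x : Fin m → Fin d → ℕ} {c : ℕ}
    (h : ∀ i, c ≤ load p x i) : c ≤ Cmin p x :=
  le_csInf (Set.range_nonempty _) (Set.forall_mem_range.2 h)

theorem exists_sumSq_lt_of_gap {p n : Fin d → ℕ} {x : Fin m → Fin d → ℕ} {i₁ i₂ : Fin m}
    {j : Fin d} (hp : ∀ k, 1 ≤ p k) (hx : IsSchedule n x)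
    (hgap : x i₂ j + univ.sup p < x i₁ j) :
    ∃ x' : Fin m → Fin d → ℕ, IsSchedule n x' ∧ (∀ i, Cmin p x ≤ load p x' i) ∧
      sumSq x' < sumSq x := by
  have h : i₁ ≠ i₂ := by rintro rfl; omega
  have hpK : ∀ k, p k ≤ univ.sup p := fun k => le_sup (mem_univ k)
  have hsingle : ∀ q, ∑ k, (Pi.single j q : Fin d → ℕ) k * p k = q * p j := fun q => by
    simp [Pi.single_apply]
  have hqx : ∀ q ≤ univ.sup p, (Pi.single j q : Fin d → ℕ) ≤ x i₁ := fun q hq k => by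
    rcases eq_or_ne k j with rfl | hkj <;> simp [*]; omega
  suffices ∃ q t, 0 < q ∧ q ≤ univ.sup p ∧ t ≤ x i₂ - x i₁ ∧
      Cmin p x ≤ load p (transfer x i₁ i₂ (Pi.single j q) t) i₁ ∧
      Cmin p x ≤ load p (transfer x i₁ i₂ (Pi.single j q) t) i₂ by
    obtain ⟨q, t, hq, hqK, ht, h₁, h₂⟩ := this
    exact ⟨_, isSchedule_transfer h (hqx q hqK) (ht.trans tsub_le_self) hx,
      le_load_transfer p (Cmin_le_load p x) h₁ h₂, sumSq_transfer_lt h hq (by omega) ht⟩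
  have hC₁ := Cmin_le_load p x i₁
  have hC₂ := Cmin_le_load p x i₂
  rcases le_or_gt (load p x i₂ + p j) (load p x i₁) with hle | hlt
  · have hK : 1 ≤ univ.sup p := (hp j).trans (hpK j)
    have e₁ := load_transfer_left (b := 0) p h (hqx 1 hK)
    have e₂ := load_transfer_right (a := Pi.single j 1) (i₁ := i₁) p (zero_le : 0 ≤ x i₂)
    simp only [hsingle, Pi.zero_apply, zero_mul, sum_const_zero] at e₁ e₂
    exact ⟨1, 0, Nat.one_pos, hK, zero_le, by omega, by omega⟩
  · obtain ⟨t, ht, q, hq, hqK, hsum⟩ := exists_le_sum_mul_eq_mul hp hpK (hp j)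
      (mul_lt_sum_tsub_mul (w := p) hgap hlt)
    have e₁ := load_transfer_left (b := t) p h (hqx q hqK)
    have e₂ := load_transfer_right (a := Pi.single j q) (i₁ := i₁) p (ht.trans tsub_le_self)
    rw [hsingle, hsum] at e₁ e₂
    exact ⟨q, t, hq, hqK, ht, by omega, by omega⟩

theorem isSchedule_single (n : Fin d → ℕ) (i₀ : Fin m) : IsSchedule n (Pi.single i₀ n) := by
  intro j
  simp [Pi.single_apply, apply_ite (fun f : Fin d → ℕ => f j)]

theorem finite_setOf_isSchedule (n : Fin d → ℕ) :
    {x : Fin m → Fin d → ℕ | IsSchedule n x}.Finite :=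
  (Set.Finite.pi fun _ => Set.Finite.pi fun j => Set.finite_Iic (n j)).subset
    fun x hx i _ j _ => Set.mem_Iic.2 <| hx j ▸
      single_le_sum (f := fun i => x i j) (fun _ _ => Nat.zero_le _) (mem_univ i)

theorem exists_Cmin_maximizer_small_gap_general (d m : ℕ) (hm : 1 ≤ m)
    (p : Fin d → ℕ) (hp : ∀ j, 1 ≤ p j) (n : Fin d → ℕ) :
    ∃ xstar : Fin m → Fin d → ℕ, IsSchedule n xstar ∧
      (∀ x : Fin m → Fin d → ℕ, IsSchedule n x → Cmin p x ≤ Cmin p xstar) ∧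
      ∀ (i₁ i₂ : Fin m) (j : Fin d), xstar i₁ j ≤ xstar i₂ j + Finset.univ.sup p := by
  set S := {x : Fin m → Fin d → ℕ | IsSchedule n x}
  obtain ⟨x₀, hx₀, hmax⟩ := S.exists_max_image (Cmin p) (finite_setOf_isSchedule n)
    ⟨_, isSchedule_single n ⟨0, hm⟩⟩
  obtain ⟨xs, ⟨hxs, hC⟩, hmin⟩ := {x ∈ S | Cmin p x = Cmin p x₀}.exists_min_image sumSq
    ((finite_setOf_isSchedule n).subset (Set.sep_subset _ _)) ⟨x₀, hx₀, rfl⟩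
  refine ⟨xs, hxs, fun x hx => hC ▸ hmax x hx, fun i₁ i₂ j => ?_⟩
  by_contra! hgap
  have : Nonempty (Fin m) := ⟨i₁⟩
  obtain ⟨x', hx', hload, hlt⟩ := exists_sumSq_lt_of_gap hp hxs hgap
  have hC' : Cmin p x' = Cmin p x₀ := le_antisymm (hmax x' hx') (hC ▸ le_Cmin hload)
  exact (hmin x' ⟨hx', hC'⟩).not_gt hlt

theorem exists_Cmin_maximizer_small_gap (d m : ℕ) (hd : 1 ≤ d) (hm : 1 ≤ m)
    (p : Fin d → ℕ) (hp : ∀ j, 1 ≤ p j) (n : Fin d → ℕ) :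
    ∃ xstar : Fin m → Fin d → ℕ, IsSchedule n xstar ∧
      (∀ x : Fin m → Fin d → ℕ, IsSchedule n x → Cmin p x ≤ Cmin p xstar) ∧
      ∀ (i₁ i₂ : Fin m) (j : Fin d), xstar i₁ j ≤ xstar i₂ j + Finset.univ.sup p :=
  exists_Cmin_maximizer_small_gap_general d m hm p hp n
end

section
/- Correctness of the reduction from Q‖C_min to P‖C_min: Let p : Fin d → ℕ with p j ≥ 1 for all j, n : Fin d → ℕ, τ ≥ 1, speeds s : Fin τ → ℕ with s i ≥ 1 for all i, machine multiplicities mq : Fin τ → ℕ with ∑_i mq i ≥ 1, and a threshold ℓ ∈ ℕ. Set smax = max_i s i, S = ∑_j p j · n j, ℓ' = S + smax·ℓ + 1 and M = ∑_i mq i. Then the following are equivalent: (1) there exists an assignment x : (Σ i : Fin τ, Fin (mq i)) → Fin d → ℕ with ∑_{machines} x · j = n j for every j and ∑_j p j · x ⟨i,k⟩ j ≥ s i · ℓ for every machine ⟨i,k⟩; (2) there exists a function y : Fin M → (Fin d ⊕ Fin τ) → ℕ with ∑_{l} y l (inl j) = n j for every j, ∑_{l} y l (inr i) = mq i for every i,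 and for every l ∈ Fin M, ∑_j p j · y l (inl j) + ∑_i (ℓ' − s i · ℓ) · y l (inr i) ≥ ℓ'. -/
/-!
An identical machine carrying one dummy job of type `i` reaches `ℓ'` exactly when its real load is
at least `s i * ℓ`, so a machine of type `i` of the uniform instance corresponds to an identical
machine carrying one dummy job of type `i`. Conversely, `ℓ'` exceeds the total processing time of
the real jobs, so every identical machine carries a dummy job; as there are exactly as many dummy
jobs as machines, each carries exactly one, and its type is the type of the machine it stands for.
-/

open Finset

section Combinatorics

variable {L ι : Type*} [Fintype L]

theorem eq_one_of_one_le_of_sum_eq_card {f : L → ℕ} (hf : ∀ l, 1 ≤ f l)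
    (hsum : ∑ l, f l = Fintype.card L) (l : L) : f l = 1 :=
  ((sum_eq_sum_iff_of_le fun l _ => hf l).1 (by simp [hsum]) l (mem_univ l)).symm

variable [DecidableEq ι]

theorem exists_eq_pi_single_of_sum_eq_one [Fintype ι] {v : ι → ℕ} (h : ∑ i, v i = 1) :
    ∃ t, v = Pi.single t 1 := by
  obtain ⟨t, ht⟩ := (Finsupp.sum_eq_one_iff (Finsupp.equivFunOnFinite.symm v)).1
    (by simpa [Finsupp.sum_fintype] using h)
  exact ⟨t, by simpa [Finsupp.single_eq_pi_single] using congrArg DFunLike.coe ht⟩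

theorem sum_pi_single_one_eq_card_fiber (t : L → ι) (i : ι) :
    ∑ l, (Pi.single (t l) 1 : ι → ℕ) i = Fintype.card {l // t l = i} := by
  simp [Pi.single_apply, Fintype.card_subtype, eq_comm]

theorem sum_sigma_pi_single_one [Fintype ι] (mq : ι → ℕ) (i : ι) :
    ∑ mk : Σ i, Fin (mq i), (Pi.single mk.1 1 : ι → ℕ) i = mq i := by
  rw [Fintype.sum_sigma]
  simp [Pi.single_apply]

theorem exists_sigmaFinEquiv_of_card_fiber {mq : ι → ℕ} (t : L → ι)
    (h : ∀ i, Fintype.card {l // t l = i} = mq i) :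
    ∃ E : (Σ i, Fin (mq i)) ≃ L, ∀ mk, t (E mk) = mk.1 :=
  ⟨(Equiv.sigmaCongrRight fun i => (Fintype.equivFinOfCardEq (h i)).symm).trans
      (Equiv.sigmaFiberEquiv t),
    fun ⟨i, k⟩ => ((Fintype.equivFinOfCardEq (h i)).symm k).2⟩

end Combinatorics

section Reduction

variable {κ ι L : Type*} [Fintype κ] [Fintype ι] [Fintype L]
  (p n : κ → ℕ) (s mq : ι → ℕ) (ℓ ℓ' : ℕ)

/-- `x mk j` copies of job type `j` go to machine `mk = ⟨i, k⟩`, the `k`-th machine of type `i`. -/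
def IsUniformSchedule (x : (Σ i, Fin (mq i)) → κ → ℕ) : Prop :=
  (∀ j, ∑ mk, x mk j = n j) ∧ ∀ mk, s mk.1 * ℓ ≤ ∑ j, p j * x mk j

/-- `y l (.inl j)` copies of job type `j` and `y l (.inr i)` dummy jobs of type `i` go to the
identical machine `l`. -/
def IsPaddedSchedule (y : L → κ ⊕ ι → ℕ) : Prop :=
  (∀ j, ∑ l, y l (Sum.inl j) = n j) ∧ (∀ i, ∑ l, y l (Sum.inr i) = mq i) ∧
    ∀ l, ℓ' ≤ ∑ j, p j * y l (Sum.inl j) + ∑ i, (ℓ' - s i * ℓ) * y l (Sum.inr i)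

variable {p n s mq ℓ ℓ'}

theorem isUniformSchedule_iff_isPaddedSchedule [DecidableEq ι]
    (hs : ∀ i, s i * ℓ ≤ ℓ') (E : (Σ i, Fin (mq i)) ≃ L)
    {x : (Σ i, Fin (mq i)) → κ → ℕ} {y : L → κ ⊕ ι → ℕ}
    (hxy : ∀ mk, y (E mk) = Sum.elim (x mk) (Pi.single mk.1 1)) :
    IsUniformSchedule p n s mq ℓ x ↔ IsPaddedSchedule p n s mq ℓ ℓ' y := by
  have hjobs (j : κ) : ∑ l, y l (Sum.inl j) = ∑ mk, x mk j := by
    simp [← E.sum_comp, hxy]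
  have hdummies (i : ι) : ∑ l, y l (Sum.inr i) = mq i := by
    simp only [← E.sum_comp, hxy, Sum.elim_inr, sum_sigma_pi_single_one]
  have hload (mk : Σ i, Fin (mq i)) :
      ∑ i, (ℓ' - s i * ℓ) * y (E mk) (Sum.inr i) = ℓ' - s mk.1 * ℓ := by
    simp [hxy, Pi.single_apply]
  simp only [IsUniformSchedule, IsPaddedSchedule, hjobs, hdummies, implies_true, true_and]
  refine and_congr_right fun _ => (forall_congr' fun mk => ?_).trans E.forall_congr_right
  rw [hload]
  simp only [hxy, Sum.elim_inl]
  have := hs mk.1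
  omega

theorem exists_isPaddedSchedule_of_isUniformSchedule [DecidableEq ι]
    (hL : Fintype.card L = ∑ i, mq i) (hs : ∀ i, s i * ℓ ≤ ℓ') {x : (Σ i, Fin (mq i)) → κ → ℕ}
    (hx : IsUniformSchedule p n s mq ℓ x) :
    ∃ y : L → κ ⊕ ι → ℕ, IsPaddedSchedule p n s mq ℓ ℓ' y := by
  let E : (Σ i, Fin (mq i)) ≃ L := Fintype.equivOfCardEq (by simp [hL])
  refine ⟨fun l => Sum.elim (x (E.symm l)) (Pi.single (E.symm l).1 1), ?_⟩
  exact (isUniformSchedule_iff_isPaddedSchedule hs E fun mk => by simp).1 hx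

theorem sum_dummies_eq_one_of_isPaddedSchedule (hL : Fintype.card L = ∑ i, mq i)
    (hS : ∑ j, p j * n j < ℓ') {y : L → κ ⊕ ι → ℕ} (hy : IsPaddedSchedule p n s mq ℓ ℓ' y)
    (l : L) : ∑ i, y l (Sum.inr i) = 1 := by
  obtain ⟨hjobs, hdummies, hload⟩ := hy
  refine eq_one_of_one_le_of_sum_eq_card (f := fun l => ∑ i, y l (Sum.inr i))
    (fun l => Nat.one_le_iff_ne_zero.2 fun h0 => ?_) ?_ l
  · have hreal : ∑ j, p j * y l (Sum.inl j) ≤ ∑ j, p j * n j :=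
      sum_le_sum fun j _ => Nat.mul_le_mul_left _ <|
        hjobs j ▸ single_le_sum (f := fun l => y l (Sum.inl j)) (by simp) (mem_univ l)
    have := hload l
    simp only [sum_eq_zero_iff.1 h0 _ (mem_univ _), mul_zero, sum_const_zero,
      add_zero] at this
    omega
  · rw [sum_comm, hL]
    exact sum_congr rfl fun i _ => hdummies i

theorem exists_isUniformSchedule_of_isPaddedSchedule [DecidableEq ι]
    (hL : Fintype.card L = ∑ i, mq i) (hs : ∀ i, s i * ℓ ≤ ℓ') (hS : ∑ j, p j * n j < ℓ')
    {y : L → κ ⊕ ι → ℕ} (hy : IsPaddedSchedule p n s mq ℓ ℓ' y) : ∃ x, IsUniformSchedule p n s mq ℓ x := by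
  choose t ht using fun l =>
    exists_eq_pi_single_of_sum_eq_one (sum_dummies_eq_one_of_isPaddedSchedule hL hS hy l)
  obtain ⟨E, hE⟩ := exists_sigmaFinEquiv_of_card_fiber (mq := mq) t fun i => by
    rw [← sum_pi_single_one_eq_card_fiber, ← hy.2.1 i]
    exact sum_congr rfl fun l _ => (congrFun (ht l) i).symm
  refine ⟨fun mk j => y (E mk) (Sum.inl j), ?_⟩
  refine (isUniformSchedule_iff_isPaddedSchedule hs E fun mk => ?_).2 hy
  ext (j | i)
  · rfl
  · simpa [hE] using congrFun (ht (E mk)) i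

end Reduction

theorem q_cmin_to_p_cmin_reduction_general (d τ : ℕ)
    (p : Fin d → ℕ) (n : Fin d → ℕ)
    (s : Fin τ → ℕ)
    (mq : Fin τ → ℕ) (ℓ : ℕ)
    (ℓ' : ℕ) (hℓ' : ℓ' = (∑ j, p j * n j) + Finset.univ.sup s * ℓ + 1) :
    (∃ x : (Σ i : Fin τ, Fin (mq i)) → Fin d → ℕ,
      (∀ j, ∑ mk, x mk j = n j) ∧
      ∀ mk : Σ i : Fin τ, Fin (mq i), s mk.1 * ℓ ≤ ∑ j, p j * x mk j) ↔
    (∃ y : Fin (∑ i, mq i) → (Fin d ⊕ Fin τ) → ℕ,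
      (∀ j, ∑ l, y l (Sum.inl j) = n j) ∧
      (∀ i, ∑ l, y l (Sum.inr i) = mq i) ∧
      ∀ l, ℓ' ≤ (∑ j, p j * y l (Sum.inl j)) +
        (∑ i, (ℓ' - s i * ℓ) * y l (Sum.inr i))) := by
  have hs (i : Fin τ) : s i * ℓ ≤ ℓ' := by
    have := Nat.mul_le_mul_right ℓ (le_sup (f := s) (mem_univ i))
    omega
  have hS : ∑ j, p j * n j < ℓ' := by omega
  have hL : Fintype.card (Fin (∑ i, mq i)) = ∑ i, mq i := Fintype.card_fin _
  exact ⟨fun ⟨_, hx⟩ => exists_isPaddedSchedule_of_isUniformSchedule hL hs hx,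
    fun ⟨_, hy⟩ => exists_isUniformSchedule_of_isPaddedSchedule hL hs hS hy⟩

theorem q_cmin_to_p_cmin_reduction (d τ : ℕ) (hτ : 1 ≤ τ)
    (p : Fin d → ℕ) (hp : ∀ j, 1 ≤ p j) (n : Fin d → ℕ)
    (s : Fin τ → ℕ) (hs : ∀ i, 1 ≤ s i)
    (mq : Fin τ → ℕ) (hmq : 1 ≤ ∑ i, mq i) (ℓ : ℕ)
    (ℓ' : ℕ) (hℓ' : ℓ' = (∑ j, p j * n j) + Finset.univ.sup s * ℓ + 1) :
    (∃ x : (Σ i : Fin τ, Fin (mq i)) → Fin d → ℕ,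
      (∀ j, ∑ mk, x mk j = n j) ∧
      ∀ mk : Σ i : Fin τ, Fin (mq i), s mk.1 * ℓ ≤ ∑ j, p j * x mk j) ↔
    (∃ y : Fin (∑ i, mq i) → (Fin d ⊕ Fin τ) → ℕ,
      (∀ j, ∑ l, y l (Sum.inl j) = n j) ∧
      (∀ i, ∑ l, y l (Sum.inr i) = mq i) ∧
      ∀ l, ℓ' ≤ (∑ j, p j * y l (Sum.inl j)) +
        (∑ i, (ℓ' - s i * ℓ) * y l (Sum.inr i))) :=
  q_cmin_to_p_cmin_reduction_general d τ p n s mq ℓ ℓ' hℓ'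
end
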